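/- arXiv:2109.12445 — 3 statements merged into one kernel-verified Lean document; each statement's English description precedes it below -/
import Mathlib

section
/- Consider the symmetric singleton congestion game built from a graph G = (V,E) with posterior p ∈ Δ(V), where resource r ∈ V has expected congestion function C^p_r(n) = 1 + 2·Σ_{r' adjacent to r} p_{r'} − p_r/n² for n ≥ 1, and a backup resource 0 with constant cost 1. In any pure Nash equilibrium, the set S = {r ∈ V : n_r > 0} of occupied non-backup resources satisfies: for every r ∈ S, p_r > 2·Σ_{r' ∈ adj(r)} p_{r'}. Consequently S is an independent set of G. -/
open Finset

/-! An occupied resource must beat the backup, so `1 + 2 s - p / n² < 1`, where `s` is the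
neighbours' mass; since `p / n² ≤ p` this forces `2 s < p`. Two adjacent occupied resources
`r, r'` would then give `p r' ≤ s_r < p r` and `p r ≤ s_{r'} < p r'`. -/

lemma lt_of_one_add_sub_div_sq_lt_one {a b : ℝ} {m : ℕ} (ha : 0 ≤ a) (hm : 0 < m)
    (h : 1 + b - a / (m : ℝ) ^ 2 < 1) : b < a := by
  have hm2 : (1 : ℝ) ≤ (m : ℝ) ^ 2 := one_le_pow₀ (by exact_mod_cast hm)
  linarith [div_le_self ha hm2]

namespace SimpleGraph

variable {V : Type*} (G : SimpleGraph V) [Fintype V] [DecidableRel G.Adj] {p : V → ℝ}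

lemma le_sum_neighborFinset_of_adj (hp : ∀ v, 0 ≤ p v) {v w : V} (h : G.Adj v w) :
    p w ≤ ∑ u ∈ G.neighborFinset v, p u :=
  single_le_sum (fun u _ => hp u) ((G.mem_neighborFinset v w).2 h)

lemma not_adj_of_sum_neighborFinset_lt (hp : ∀ v, 0 ≤ p v) {v w : V}
    (hv : ∑ u ∈ G.neighborFinset v, p u < p v) (hw : ∑ u ∈ G.neighborFinset w, p u < p w) :
    ¬ G.Adj v w := fun h => by
  linarith [G.le_sum_neighborFinset_of_adj hp h, G.le_sum_neighborFinset_of_adj hp h.symm]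

end SimpleGraph

theorem stmt9_general {V : Type*} [Fintype V]
    (G : SimpleGraph V) [DecidableRel G.Adj]
    (p : V → ℝ) (hp : ∀ r, 0 ≤ p r)
    (n : V → ℕ)
    (C : V → ℕ → ℝ)
    (hC : ∀ r m, C r m = 1 + 2 * (∑ r' ∈ G.neighborFinset r, p r') - p r / (m : ℝ) ^ 2)
    (heq : ∀ r, 0 < n r → C r (n r) < 1) :
    (∀ r, 0 < n r → 2 * (∑ r' ∈ G.neighborFinset r, p r') < p r) ∧
    (∀ r r', 0 < n r → 0 < n r' → ¬ G.Adj r r') := by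
  have heavy : ∀ r, 0 < n r → 2 * (∑ r' ∈ G.neighborFinset r, p r') < p r := fun r hr =>
    lt_of_one_add_sub_div_sq_lt_one (hp r) hr (hC r (n r) ▸ heq r hr)
  have heavy' : ∀ r, 0 < n r → ∑ r' ∈ G.neighborFinset r, p r' < p r := fun r hr => by
    linarith [heavy r hr, sum_nonneg fun r' (_ : r' ∈ G.neighborFinset r) => hp r']
  exact ⟨heavy, fun r r' hr hr' =>
    G.not_adj_of_sum_neighborFinset_lt hp (heavy' r hr) (heavy' r' hr')⟩

/-- in any pure NE of the graph-based game, every occupied resource r has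
p_r > 2·Σ_{r'~r} p_{r'}, hence the occupied set is independent. -/
theorem stmt9 {V : Type*} [Fintype V] [DecidableEq V]
    (G : SimpleGraph V) [DecidableRel G.Adj]
    (p : V → ℝ) (hp : ∀ r, 0 ≤ p r) (hps : ∑ r, p r = 1)
    (n : V → ℕ)
    (C : V → ℕ → ℝ)
    (hC : ∀ r m, C r m = 1 + 2 * (∑ r' ∈ G.neighborFinset r, p r') - p r / (m : ℝ) ^ 2)
    (heq : ∀ r, 0 < n r → C r (n r) < 1) :
    (∀ r, 0 < n r → 2 * (∑ r' ∈ G.neighborFinset r, p r') < p r) ∧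
    (∀ r r', 0 < n r → 0 < n r' → ¬ G.Adj r r') :=
  stmt9_general G p hp n C hC heq
end

section
/- In the graph-based congestion game, suppose at a pure Nash equilibrium every occupied resource r ∈ S satisfies p_r/(n_r+1)² ≤ 2·Σ_{r'∈adj(r)} p_{r'}, with Σ_{r∈S} p_r ≤ 1 and n_r ≥ 1 for r ∈ S. Then the total social cost Σ_{r∈S} n_r·C^p_r(n_r) + (N − Σ_{r∈S} n_r)·1 is at least N − 3/4, where C^p_r(n) = 1 + 2·Σ_{r'∈adj(r)} p_{r'} − p_r/n². -/
/-!
Each occupied resource contributes `n·C(n) = n + 2n·A − p/n` to the social cost, where `A` is the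
neighbouring mass. The equilibrium condition `p/(n+1)² ≤ 2A` bounds the loss below `n` by
`p·(2n+1)/(n(n+1)²)`, and this coefficient is at most `3/4` (with equality at `n = 1`). Summing and
using `Σ p ≤ 1` gives the bound.
-/

open Finset

theorem two_mul_add_one_div_le_three_div_four {x : ℝ} (hx : 1 ≤ x) :
    (2 * x + 1) / (x * (x + 1) ^ 2) ≤ 3 / 4 := by
  rw [div_le_iff₀ (by positivity)]
  nlinarith [mul_nonneg (sub_nonneg.2 hx) (sub_nonneg.2 hx)]

theorem sub_le_mul_one_add_sub_div_sq {x p a : ℝ} (hx : 1 ≤ x) (hp : 0 ≤ p)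
    (ha : p / (x + 1) ^ 2 ≤ 2 * a) :
    x - 3 / 4 * p ≤ x * (1 + 2 * a - p / x ^ 2) := by
  have hx0 : 0 < x := by linarith
  calc x - 3 / 4 * p
      ≤ x - p * ((2 * x + 1) / (x * (x + 1) ^ 2)) := by
        nlinarith [two_mul_add_one_div_le_three_div_four hx]
    _ = x + x * (p / (x + 1) ^ 2) - p / x := by field_simp; ring
    _ ≤ x + x * (2 * a) - p / x := by gcongr
    _ = x * (1 + 2 * a - p / x ^ 2) := by field_simp

theorem natCast_sub_le_mul_one_add_sub_div_sq (n : ℕ) {p a : ℝ} (hp : 0 ≤ p)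
    (ha : p / ((n : ℝ) + 1) ^ 2 ≤ 2 * a) :
    (n : ℝ) - 3 / 4 * p ≤ n * (1 + 2 * a - p / (n : ℝ) ^ 2) := by
  rcases Nat.eq_zero_or_pos n with rfl | hn
  · simp only [Nat.cast_zero, zero_sub, zero_mul]
    linarith
  · exact sub_le_mul_one_add_sub_div_sq (by exact_mod_cast hn) hp ha

theorem stmt11_general {V : Type*} [Fintype V]
    (G : SimpleGraph V) [DecidableRel G.Adj]
    (p : V → ℝ) (hp : ∀ r, 0 ≤ p r)
    (S : Finset V) (hpS : ∑ r ∈ S, p r ≤ 1)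
    (N : ℕ) (n : V → ℕ)
    (C : V → ℕ → ℝ)
    (hC : ∀ r m, C r m = 1 + 2 * (∑ r' ∈ G.neighborFinset r, p r') - p r / (m : ℝ) ^ 2)
    (hdev : ∀ r ∈ S,
      p r / ((n r : ℝ) + 1) ^ 2 ≤ 2 * ∑ r' ∈ G.neighborFinset r, p r') :
    (N : ℝ) - 3 / 4 ≤
      (∑ r ∈ S, (n r : ℝ) * C r (n r)) + ((N : ℝ) - ∑ r ∈ S, (n r : ℝ)) * 1 := by
  have hcost : ∀ r ∈ S, (n r : ℝ) - 3 / 4 * p r ≤ n r * C r (n r) := fun r hr => by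
    rw [hC]
    exact natCast_sub_le_mul_one_add_sub_div_sq (n r) (hp r) (hdev r hr)
  have hsum := sum_le_sum hcost
  rw [sum_sub_distrib, ← mul_sum] at hsum
  linarith

/-- social cost lower bound N − 3/4 in Situation 2. -/
theorem stmt11 {V : Type*} [Fintype V] [DecidableEq V]
    (G : SimpleGraph V) [DecidableRel G.Adj]
    (p : V → ℝ) (hp : ∀ r, 0 ≤ p r)
    (S : Finset V) (hpS : ∑ r ∈ S, p r ≤ 1)
    (N : ℕ) (n : V → ℕ)
    (hn1 : ∀ r ∈ S, 1 ≤ n r) (hnN : ∑ r ∈ S, n r ≤ N)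
    (C : V → ℕ → ℝ)
    (hC : ∀ r m, C r m = 1 + 2 * (∑ r' ∈ G.neighborFinset r, p r') - p r / (m : ℝ) ^ 2)
    (hdev : ∀ r ∈ S,
      p r / ((n r : ℝ) + 1) ^ 2 ≤ 2 * ∑ r' ∈ G.neighborFinset r, p r') :
    (N : ℝ) - 3 / 4 ≤
      (∑ r ∈ S, (n r : ℝ) * C r (n r)) + ((N : ℝ) - ∑ r ∈ S, (n r : ℝ)) * 1 :=
  stmt11_general G p hp S hpS N n C hC hdev
end

section
/- In the three-resource example game, the private signaling scheme that reveals the true state to agents 2,...,N and reveals nothing to agent 1 admits a Bayes Nash equilibrium in which agents 2,...,N choose the realized cheap resource and agent 1 chooses resource C of cost 1+ε, and the expected total social cost of this equilibrium is 1+ε (since the N−1 agents on the cheap resource each pay c(N−1) = 0). -/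
open Finset

/-- revealing the state to agents 2..N and nothing to agent 1 admits the
Bayes Nash equilibrium where informed agents take the realized cheap resource and the
uninformed agent takes resource C, with expected total social cost 1+ε. -/
theorem stmt14 (N : ℕ) (hN : 0 < N) (ε : ℝ) (hε1 : 0 < ε) (hε2 : ε < 1 / 2)
    (cheap : Bool → Fin 3) (hch1 : cheap false = 0) (hch2 : cheap true = 1)
    (c : Bool → Fin 3 → ℕ → ℝ)
    (hc : ∀ s r m, c s r m =
      if r = cheap s then (if N ≤ m then 1 else 0) else if r = 2 then 1 + ε else 2)
    (σ : Fin N → Bool → Fin 3)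
    (hσ0 : ∀ s, σ ⟨0, hN⟩ s = 2)
    (hσ1 : ∀ i s, i ≠ (⟨0, hN⟩ : Fin N) → σ i s = cheap s)
    (n : Bool → Fin 3 → ℕ)
    (hn : ∀ s r, n s r = (univ.filter fun i => σ i s = r).card) :
    -- informed agents are obedient in every state
    (∀ s : Bool, ∀ i : Fin N, i ≠ (⟨0, hN⟩ : Fin N) → ∀ r : Fin 3, r ≠ σ i s →
        c s (σ i s) (n s (σ i s)) ≤ c s r (n s r + 1)) ∧
    -- the uninformed agent is obedient in expectation
    (∀ r : Fin 3, r ≠ 2 →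
        (1 / 2) * c false 2 (n false 2) + (1 / 2) * c true 2 (n true 2)
          ≤ (1 / 2) * c false r (n false r + 1) + (1 / 2) * c true r (n true r + 1)) ∧
    -- expected total social cost equals 1 + ε
    ((1 / 2) * (∑ i, c false (σ i false) (n false (σ i false)))
      + (1 / 2) * (∑ i, c true (σ i true) (n true (σ i true))) = 1 + ε) := by
  set z : Fin N := ⟨0, hN⟩ with hz
  have hcheap2 : ∀ s, cheap s ≠ 2 := by
    intro s; cases s <;> simp [hch1, hch2]
  have hn2 : ∀ s, n s 2 = 1 := by
    intro s
    rw [hn]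
    have : (univ.filter fun i => σ i s = 2) = {z} := by
      ext i
      simp only [mem_filter, mem_univ, true_and, mem_singleton]
      constructor
      · intro h
        by_contra hi
        exact hcheap2 s ((hσ1 i s hi) ▸ h)
      · intro h; subst h; exact hσ0 s
    rw [this]; simp
  have hnc : ∀ s, n s (cheap s) = N - 1 := by
    intro s
    rw [hn]
    have : (univ.filter fun i => σ i s = cheap s) = univ \ {z} := by
      ext i
      simp only [mem_filter, mem_univ, true_and, mem_sdiff, mem_singleton]
      constructor
      · intro h hi
        subst hi
        exact hcheap2 s (h.symm.trans (hσ0 s))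
      · exact fun hi => hσ1 i s hi
    rw [this, card_sdiff_of_subset (by simp)]
    simp
  have hNle : ¬ N ≤ N - 1 := by omega
  have hcost0 : ∀ s, c s (cheap s) (n s (cheap s)) = 0 := by
    intro s; rw [hc, hnc]; simp [hNle]
  have hcostC : ∀ s m, c s 2 m = 1 + ε := by
    intro s m; rw [hc]; simp [(hcheap2 s).symm, Ne.symm (hcheap2 s)]
  refine ⟨?_, ?_, ?_⟩
  · intro s i hi r hr
    rw [hσ1 i s hi] at hr ⊢
    rw [hcost0, hc]
    have : r ≠ cheap s := hr
    rw [if_neg this]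
    split <;> linarith
  · intro r hr
    rw [hcostC, hcostC]
    have hr01 : r = 0 ∨ r = 1 := by omega
    have hnf0 : n false 0 = N - 1 := by have := hnc false; rwa [hch1] at this
    have hnt1 : n true 1 = N - 1 := by have := hnc true; rwa [hch2] at this
    have key : c false r (n false r + 1) + c true r (n true r + 1) = 3 := by
      rcases hr01 with h | h <;> subst h
      · have e1 : c false 0 (n false 0 + 1) = 1 := by
          rw [hc, hch1, if_pos rfl, hnf0, if_pos (by omega)]
        have e2 : c true 0 (n true 0 + 1) = 2 := by
          rw [hc, hch2, if_neg (by decide), if_neg (by decide)]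
        rw [e1, e2]; norm_num
      · have e1 : c false 1 (n false 1 + 1) = 2 := by
          rw [hc, hch1, if_neg (by decide), if_neg (by decide)]
        have e2 : c true 1 (n true 1 + 1) = 1 := by
          rw [hc, hch2, if_pos rfl, hnt1, if_pos (by omega)]
        rw [e1, e2]; norm_num
    linarith
  · have hsum : ∀ s, (∑ i, c s (σ i s) (n s (σ i s))) = 1 + ε := by
      intro s
      rw [Finset.sum_eq_single_of_mem z (mem_univ z)]
      · rw [hσ0, hcostC]
      · intro i _ hi
        rw [hσ1 i s hi, hcost0]
    rw [hsum, hsum]; ring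
end
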